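/- For every b : ω → ω with b(n) ≥ 1 for all n, the prediction forcing PR_b is σ-soft-linked. -/

import Mathlib

universe u

variable {α : Type u} [Preorder α]

/-- `p` and `q` are compatible: some `r` extends both. -/
def Compat (p q : α) : Prop := ∃ r : α, r ≤ p ∧ r ≤ q

/-- `A` is a maximal antichain: pairwise incompatible, and every condition is
compatible with a member of `A`. -/
def IsMaxAC (A : Set α) : Prop :=
  (∀ p ∈ A, ∀ q ∈ A, p ≠ q → ¬Compat p q) ∧ ∀ p : α, ∃ q ∈ A, Compat p q

/-- `Q` is leaf-linked: for every maximal antichain enumerated as `{p n : n ∈ ω}`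
there is `n` such that every `q ∈ Q` is compatible with some `p j`, `j < n`. -/
def LeafLinked (Q : Set α) : Prop :=
  ∀ p : ℕ → α, IsMaxAC (Set.range p) → ∃ n : ℕ, ∀ q ∈ Q, ∃ j < n, Compat q (p j)

/-- `D` is dense in the preorder. -/
def DenseSub (D : Set α) : Prop := ∀ p : α, ∃ q ∈ D, q ≤ p

/-- The countable chain condition: every antichain is countable. -/
def CCC (α : Type u) [Preorder α] : Prop :=
  ∀ A : Set α, (∀ p ∈ A, ∀ q ∈ A, p ≠ q → ¬Compat p q) → A.Countable

/-- `P` is σ-soft-linked. -/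
def SigmaSoftLinked (α : Type u) [Preorder α] : Prop :=
  ∃ Q : ℕ → Set α, (∀ n, LeafLinked (Q n)) ∧ DenseSub (⋃ n, Q n) ∧
    ∀ n n' : ℕ, ∃ k : ℕ, ∀ p ∈ Q n, ∀ q ∈ Q n',
      Compat p q → ∃ r ∈ Q k, r ≤ p ∧ r ≤ q

/-- `f` codes a member of `∏_{n<k} b n` for some `k ≤ ω`, as a partial
function `ℕ → Option ℕ` whose domain is `{n : n < k}`. -/
def IsSeq (b : ℕ → ℕ) (f : ℕ → Option ℕ) : Prop :=
  (∀ n v, f n = some v → v < b n) ∧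
    ∃ k : ℕ∞, ∀ n : ℕ, (f n).isSome ↔ (n : ℕ∞) < k

/-- Extension of partial functions: `f ⊆ g`. -/
def SubFun (f g : ℕ → Option ℕ) : Prop := ∀ n v, f n = some v → g n = some v

/-- Conditions of the prediction forcing `PR_b`: triples `(A, π, F)` with
`A ⊆ ω` finite, `π n : ∏_{m<n} b m → b n` for `n ∈ A` (coded on all of `ω`;
only the values on `A` are relevant for the order), and `F` a finite set of
members of `∏_{n<k} b n`, `k ≤ ω`. -/
structure PRCond (b : ℕ → ℕ) where
  A : Finset ℕ
  pr : ∀ n : ℕ, ((k : Fin n) → Fin (b k)) → Fin (b n)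
  F : Set (ℕ → Option ℕ)
  hF : F.Finite
  hFseq : ∀ f ∈ F, IsSeq b f

/-- The order of `PR_b`: `(A',π',F') ≤ (A,π,F)` iff (a) `A ⊆ A'`, `π ⊆ π'`;
(b) every member of `A'∖A` lies above every member of `A`; (c) every `f ∈ F`
has an extension in `F'`; (d) `π'_n(f↾n) = f n` for every `f ∈ F` and every
`n ∈ (A'∖A) ∩ dom f`. -/
def PRle {b : ℕ → ℕ} (x y : PRCond b) : Prop :=
  (y.A ⊆ x.A ∧ ∀ n ∈ y.A, x.pr n = y.pr n) ∧
  (∀ n ∈ y.A, ∀ n' ∈ x.A, n' ∉ y.A → n < n') ∧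
  (∀ f ∈ y.F, ∃ g ∈ x.F, SubFun f g) ∧
  (∀ f ∈ y.F, ∀ n ∈ x.A, n ∉ y.A → ∀ v : ℕ, f n = some v →
    ∀ g : (k : Fin n) → Fin (b k),
      (∀ k : Fin n, f (k : ℕ) = some ((g k : ℕ))) → ((x.pr n g : ℕ)) = v)

instance {b : ℕ → ℕ} : Preorder (PRCond b) where
  le := PRle
  le_refl x :=
    ⟨⟨subset_rfl, fun _ _ => rfl⟩,
      fun n hn n' hn' h => absurd hn' h,
      fun f hf => ⟨f, hf, fun _ _ h => h⟩,
      fun f hf n hn hn' => absurd hn hn'⟩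
  le_trans x y z hxy hyz := by
    obtain ⟨⟨ha1, ha2⟩, hb, hc, hd⟩ := hxy
    obtain ⟨⟨ha1', ha2'⟩, hb', hc', hd'⟩ := hyz
    refine ⟨⟨ha1'.trans ha1,
      fun n hn => (ha2 n (ha1' hn)).trans (ha2' n hn)⟩, ?_, ?_, ?_⟩
    · intro n hn n' hn' hn''
      by_cases hmem : n' ∈ y.A
      · exact hb' n hn n' hmem hn''
      · exact hb n (ha1' hn) n' hn' hmem
    · intro f hf
      obtain ⟨g, hg, hfg⟩ := hc' f hf
      obtain ⟨g', hg', hgg'⟩ := hc g hg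
      exact ⟨g', hg', fun n v hv => hgg' n v (hfg n v hv)⟩
    · intro f hf n hn hn' v hv g hg
      by_cases hmem : n ∈ y.A
      · rw [ha2 n hmem]
        exact hd' f hf n hmem hn' v hv g hg
      · obtain ⟨f', hf', hff'⟩ := hc' f hf
        exact hd f' hf' n hn hmem v (hff' n v hv) g
          (fun k => hff' _ _ (hg k))

/-!
Split `PR_b` into the countably many pieces of conditions with a fixed working part `(A, π)` and
at most `l` side conditions `f ∈ F`. Two compatible conditions have `⊆`-comparable sets `A`, and
then the working part of the larger one together with both sets of side conditions is a common
extension; this gives the amalgamation clause.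

For leaf-linkedness, suppose `q m` lies in one piece and is incompatible with the first `m`
members of a maximal antichain. Along a nonprincipal ultrafilter the side conditions of the
`q m` converge pointwise, and with the working part of the piece they form a limit condition `r`.
Some `r' ≤ r` extends a member `p j` of the antichain; the new predictors of `r'` live below
`max A(r')`, where infinitely many `q m` agree with the limit, so for `m > j` they also predict the
side conditions of `q m`, and `q m` is compatible with `r'`, hence with `p j`.
-/

theorem Compat.symm {α : Type*} [Preorder α] {p q : α} (h : Compat p q) : Compat q p :=
  let ⟨r, hrp, hrq⟩ := h
  ⟨r, hrq, hrp⟩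

theorem sigmaSoftLinked_of_countable {α ι : Type*} [Preorder α] [Countable ι] [Nonempty ι]
    (Q : ι → Set α) (hQ : ∀ i, LeafLinked (Q i)) (hdense : DenseSub (⋃ i, Q i))
    (hamalg : ∀ i j, ∃ k, ∀ p ∈ Q i, ∀ q ∈ Q j, Compat p q → ∃ r ∈ Q k, r ≤ p ∧ r ≤ q) :
    SigmaSoftLinked α := by
  obtain ⟨e, he⟩ := exists_surjective_nat ι
  refine ⟨Q ∘ e, fun n => hQ (e n), ?_, fun n n' => ?_⟩
  · rwa [Function.comp_def, he.iUnion_comp Q]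
  · obtain ⟨k, hk⟩ := hamalg (e n) (e n')
    obtain ⟨k', rfl⟩ := he k
    exact ⟨k', hk⟩

theorem exists_fin_enum {β : Type*} {S : Set β} (hS : S.Finite) {l : ℕ} (hl : S.ncard ≤ l)
    (d : β) : ∃ σ : Fin l → β, S ⊆ Set.range σ ∧ ∀ i, σ i = d ∨ σ i ∈ S := by
  classical
  set L := hS.toFinset.toList
  have hlen : L.length ≤ l := by
    rwa [Finset.length_toList, ← Set.ncard_eq_toFinset_card _ hS]
  refine ⟨fun i => L.getD i d, fun x hx => ?_, fun i => ?_⟩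
  · obtain ⟨i, hi, rfl⟩ := List.mem_iff_getElem.1 (by simpa [L] using hx : x ∈ L)
    exact ⟨⟨i, hi.trans_le hlen⟩, List.getD_eq_getElem _ _ hi⟩
  · by_cases hi : (i : ℕ) < L.length
    · right
      have hmem : L[(i : ℕ)] ∈ L := List.getElem_mem hi
      rw [Finset.mem_toList, Set.Finite.mem_toFinset] at hmem
      simpa only [List.getD_eq_getElem _ _ hi] using hmem
    · exact .inl (List.getD_eq_default _ _ (not_lt.1 hi))

section Sequences

variable {b : ℕ → ℕ}

theorem isSeq_empty : IsSeq b fun _ => none :=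
  ⟨fun _ _ h => (nomatch h), 0, fun n => by simp⟩

theorem isSeq_of_downward_closed {f : ℕ → Option ℕ} (hlt : ∀ n v, f n = some v → v < b n)
    (hdc : ∀ n n', n ≤ n' → (f n').isSome → (f n).isSome) : IsSeq b f := by
  refine ⟨hlt, ?_⟩
  by_cases h : ∃ n, f n = none
  · refine ⟨Nat.find h, fun n => ⟨fun hn => ?_, fun hn => ?_⟩⟩
    · by_contra! hle
      have hfind := hdc _ n (by exact_mod_cast hle) hn
      rw [Nat.find_spec h] at hfind
      exact Bool.false_ne_true hfind
    · exact Option.isSome_iff_ne_none.2 (Nat.find_min h (by exact_mod_cast hn))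
  · push Not at h
    exact ⟨⊤, fun n => by simpa [Option.isSome_iff_ne_none] using h n⟩

theorem IsSeq.of_eventually_eq {ι : Type*} {L : Filter ι} [L.NeBot] {f : ι → ℕ → Option ℕ}
    {g : ℕ → Option ℕ} (hf : ∀ i, IsSeq b (f i)) (hg : ∀ n, ∀ᶠ i in L, f i n = g n) :
    IsSeq b g := by
  refine isSeq_of_downward_closed (fun n v hv => ?_) (fun n n' hle hn' => ?_)
  · obtain ⟨i, hi⟩ := (hg n).exists
    exact (hf i).1 n v (hi.trans hv)
  · obtain ⟨i, hin, hin'⟩ := ((hg n).and (hg n')).exists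
    obtain ⟨k, hk⟩ := (hf i).2
    rw [← hin, hk]
    rw [← hin', hk] at hn'
    exact lt_of_le_of_lt (by exact_mod_cast hle) hn'

theorem IsSeq.exists_ultrafilter_limit {ι : Type*} (U : Ultrafilter ι) {f : ι → ℕ → Option ℕ}
    (hf : ∀ i, IsSeq b (f i)) : ∃ g, IsSeq b g ∧ ∀ n, ∀ᶠ i in U, f i n = g n := by
  have hlim : ∀ n, ∃ o, ∀ᶠ i in U, f i n = o := by
    intro n
    have hfin : (insert none (some '' Set.Iio (b n))).Finite :=
      ((Set.finite_Iio _).image _).insert _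
    suffices ∀ i, ∃ o ∈ insert none (some '' Set.Iio (b n)), f i n = o by
      obtain ⟨o, -, ho⟩ := (Ultrafilter.eventually_exists_mem_iff hfin).1 (.of_forall this)
      exact ⟨o, ho⟩
    intro i
    cases hfi : f i n with
    | none => exact ⟨none, Set.mem_insert _ _, rfl⟩
    | some v => exact ⟨some v, Set.mem_insert_of_mem _ ⟨v, (hf i).1 n v hfi, rfl⟩, rfl⟩
  choose g hg using hlim
  exact ⟨g, IsSeq.of_eventually_eq hf hg, hg⟩

end Sequences

namespace PRCond

variable {b : ℕ → ℕ}

theorem A_subset_or_subset_of_compat {p q : PRCond b} (h : Compat p q) :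
    p.A ⊆ q.A ∨ q.A ⊆ p.A := by
  by_contra! hc
  obtain ⟨m, hmp, hmq⟩ := Finset.not_subset.1 hc.1
  obtain ⟨m', hmq', hmp'⟩ := Finset.not_subset.1 hc.2
  obtain ⟨s, ⟨⟨hps, -⟩, hsp, -⟩, ⟨⟨hqs, -⟩, hsq, -⟩⟩ := h
  have := hsp m hmp m' (hqs hmq') hmp'
  have := hsq m' hmq' m (hps hmp) hmq
  omega

def amalg (p q : PRCond b) : PRCond b :=
  ⟨q.A, q.pr, p.F ∪ q.F, p.hF.union q.hF, fun f hf => hf.elim (p.hFseq f) (q.hFseq f)⟩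

theorem amalg_le_right (p q : PRCond b) : amalg p q ≤ q :=
  ⟨⟨subset_rfl, fun _ _ => rfl⟩, fun _ _ _ hn' h => absurd hn' h,
    fun f hf => ⟨f, .inr hf, fun _ _ hv => hv⟩, fun _ _ _ hn hn' => absurd hn hn'⟩

theorem amalg_le_left_of_le {p q s : PRCond b} (hsp : s ≤ p) (hsq : s ≤ q) (hA : p.A ⊆ q.A) :
    amalg p q ≤ p := by
  obtain ⟨⟨-, hpr⟩, hsp, -, hpred⟩ := hsp
  obtain ⟨⟨hqs, hqr⟩, -⟩ := hsq
  refine ⟨⟨hA, fun n hn => (hqr n (hA hn)).symm.trans (hpr n hn)⟩,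
    fun n hn n' hn' hn'' => hsp n hn n' (hqs hn') hn'',
    fun f hf => ⟨f, .inl hf, fun _ _ hv => hv⟩, fun f hf n hn hn' v hv g hg => ?_⟩
  change (q.pr n g : ℕ) = v
  rw [← hqr n hn]
  exact hpred f hf n (hqs hn) hn' v hv g hg

/-- Clause (d) only looks at the levels of `s.A`, so agreement up to `max s.A` suffices. -/
theorem amalg_le_left_of_agree {p r s : PRCond b} (hsr : s ≤ r) (hA : r.A = p.A)
    (hpr : ∀ n ∈ p.A, r.pr n = p.pr n)
    (hF : ∀ f ∈ p.F, ∃ g ∈ r.F, ∀ n ≤ s.A.sup id, f n = g n) : amalg p s ≤ p := by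
  obtain ⟨⟨hrs, hsr'⟩, habove, -, hpred⟩ := hsr
  rw [hA] at hrs hsr' habove hpred
  refine ⟨⟨hrs, fun n hn => (hsr' n hn).trans (hpr n hn)⟩, habove,
    fun f hf => ⟨f, .inl hf, fun _ _ hv => hv⟩, fun f hf n hn hn' v hv g hg => ?_⟩
  obtain ⟨f', hf', hff'⟩ := hF f hf
  have hnM : n ≤ s.A.sup id := Finset.le_sup (f := id) hn
  refine hpred f' hf' n hn hn' v ((hff' n hnM).symm.trans hv) g fun k => ?_
  rw [← hff' k (k.2.le.trans hnM)]
  exact hg k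

theorem amalg_le_of_compat {p q : PRCond b} (h : Compat p q) (hA : p.A ⊆ q.A) :
    amalg p q ≤ p ∧ amalg p q ≤ q :=
  let ⟨_, hsp, hsq⟩ := h
  ⟨amalg_le_left_of_le hsp hsq hA, amalg_le_right p q⟩

abbrev Predictors (b : ℕ → ℕ) (A : Finset ℕ) : Type :=
  ∀ n : A, ((k : Fin (n : ℕ)) → Fin (b k)) → Fin (b n)

def piece (A : Finset ℕ) (π : Predictors b A) (l : ℕ) : Set (PRCond b) :=
  {x | x.A = A ∧ (∀ n (h : n ∈ A), x.pr n = π ⟨n, h⟩) ∧ x.F.ncard ≤ l}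

theorem mem_piece_self (x : PRCond b) : x ∈ piece x.A (fun n => x.pr n) x.F.ncard :=
  ⟨rfl, fun _ _ => rfl, le_rfl⟩

theorem amalg_mem_piece {p q : PRCond b} {A A' : Finset ℕ} {π : Predictors b A}
    {π' : Predictors b A'} {l l' : ℕ} (hp : p ∈ piece A π l) (hq : q ∈ piece A' π' l') :
    amalg p q ∈ piece A' π' (l + l') :=
  ⟨hq.1, hq.2.1, (Set.ncard_union_le _ _).trans (add_le_add hp.2.2 hq.2.2)⟩

theorem exists_limit_condition {A : Finset ℕ} {π : Predictors b A} {l : ℕ} (q : ℕ → PRCond b)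
    (hq : ∀ m, q m ∈ piece A π l) :
    ∃ r : PRCond b, ∀ r' ≤ r, ∃ᶠ m in Filter.atTop, Compat (q m) r' := by
  have henum : ∀ m, ∃ σ : Fin l → ℕ → Option ℕ,
      (q m).F ⊆ Set.range σ ∧ ∀ i, IsSeq b (σ i) := by
    intro m
    obtain ⟨σ, hcover, hσ⟩ := exists_fin_enum (q m).hF (hq m).2.2 fun _ => none
    refine ⟨σ, hcover, fun i => ?_⟩
    rcases hσ i with h | h
    · rw [h]
      exact isSeq_empty
    · exact (q m).hFseq _ h
  choose σ hcover hσ using henum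
  let U := Filter.hyperfilter ℕ
  choose G hG hlim using fun i => IsSeq.exists_ultrafilter_limit U (f := fun m => σ m i)
    fun m => hσ m i
  refine ⟨⟨A, (q 0).pr, Set.range G, Set.finite_range G, Set.forall_mem_range.2 hG⟩,
    fun r' hr' => ?_⟩
  have hagree : ∀ᶠ m in U, ∀ i, ∀ n ∈ Set.Iic (r'.A.sup id), σ m i n = G i n :=
    Filter.eventually_all.2 fun i => (Set.finite_Iic _).eventually_all.2 fun n _ => hlim i n
  refine ((hagree.mono fun m hm => ?_).frequently).filter_mono
    (Filter.hyperfilter_le_cofinite.trans Nat.cofinite_eq_atTop.le)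
  refine ⟨amalg (q m) r', amalg_le_left_of_agree hr' (hq m).1.symm (fun n hn => ?_)
    (fun f hf => ?_), amalg_le_right _ _⟩
  · rw [(hq m).1] at hn
    exact ((hq 0).2.1 n hn).trans ((hq m).2.1 n hn).symm
  · obtain ⟨i, rfl⟩ := hcover m hf
    exact ⟨G i, ⟨i, rfl⟩, fun n hn => hm i n hn⟩

theorem leafLinked_piece (A : Finset ℕ) (π : Predictors b A) (l : ℕ) :
    LeafLinked (piece A π l) := by
  intro p hp
  by_contra! hcon
  choose q hq hinc using hcon
  obtain ⟨r, hr⟩ := exists_limit_condition q hq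
  obtain ⟨-, ⟨j, rfl⟩, r', hr'r, hr'p⟩ := hp.2 r
  obtain ⟨m, ⟨s, hsq, hsr'⟩, hjm⟩ :=
    ((hr r' hr'r).and_eventually (Filter.eventually_gt_atTop j)).exists
  exact hinc m j hjm ⟨s, hsq, hsr'.trans hr'p⟩

theorem exists_piece_amalg {A A' : Finset ℕ} (π : Predictors b A) (π' : Predictors b A')
    (l l' : ℕ) : ∃ (B : Finset ℕ) (ρ : Predictors b B) (k : ℕ), ∀ p ∈ piece A π l,
      ∀ q ∈ piece A' π' l', Compat p q → ∃ r ∈ piece B ρ k, r ≤ p ∧ r ≤ q := by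
  by_cases hAA' : A ⊆ A'
  · refine ⟨A', π', l + l', fun p hp q hq hpq => ?_⟩
    have hA : p.A ⊆ q.A := by rwa [hp.1, hq.1]
    exact ⟨amalg p q, amalg_mem_piece hp hq, amalg_le_of_compat hpq hA⟩
  · refine ⟨A, π, l' + l, fun p hp q hq hpq => ?_⟩
    have hA : q.A ⊆ p.A :=
      (A_subset_or_subset_of_compat hpq).resolve_left (by rwa [hp.1, hq.1])
    exact ⟨amalg q p, amalg_mem_piece hq hp, (amalg_le_of_compat hpq.symm hA).symm⟩

end PRCond

theorem stmt18_general (b : ℕ → ℕ) :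
    SigmaSoftLinked (PRCond b) := by
  have : Nonempty (Σ A : Finset ℕ, PRCond.Predictors b A × ℕ) := ⟨⟨∅, isEmptyElim, 0⟩⟩
  refine sigmaSoftLinked_of_countable
    (fun i : Σ A : Finset ℕ, PRCond.Predictors b A × ℕ => PRCond.piece i.1 i.2.1 i.2.2)
    (fun i => PRCond.leafLinked_piece _ _ _)
    (fun x => ⟨x, Set.mem_iUnion.2 ⟨⟨x.A, fun n => x.pr n, x.F.ncard⟩, x.mem_piece_self⟩,
      le_rfl⟩)
    (fun i j => ?_)
  obtain ⟨B, ρ, k, hk⟩ := PRCond.exists_piece_amalg i.2.1 j.2.1 i.2.2 j.2.2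
  exact ⟨⟨B, ρ, k⟩, hk⟩

/-- For every `b : ω → ω` with `b n ≥ 1` for all `n`, the prediction forcing
`PR_b` is σ-soft-linked. -/
theorem stmt18 (b : ℕ → ℕ) (hb : ∀ n, 1 ≤ b n) :
    SigmaSoftLinked (PRCond b) :=
  stmt18_general b
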